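/- arXiv:0805.1878 — 6 statements merged into one kernel-verified Lean document; each statement's English description precedes it below -/
import Mathlib

section
/- Let k, l, m, n be nonnegative integers with k < m, n < l, k < l, n < m (a line segment from (k,l) to (m,n) crossing the diagonal of the first quadrant from above-left to below-right). If additionally ml - nk + k - m + n - l > 0, then (ml - nk)(ml - nk + k - m + n - l) + g^2(n - m)(k - l) > 0 for every positive integer g with g ≤ m - k and g ≤ l - n. -/
/-- Positivity of F for a facet crossing the diagonal. -/
theorem stmt0 (k l m n : ℤ) (hk : 0 ≤ k) (hn : 0 ≤ n)
    (hkm : k < m) (hnl : n < l) (hkl : k < l) (hnm : n < m)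
    (hpos : 0 < m * l - n * k + k - m + n - l) :
    ∀ g : ℤ, 0 < g → g ≤ m - k → g ≤ l - n →
      0 < (m * l - n * k) * (m * l - n * k + k - m + n - l)
            + g ^ 2 * (n - m) * (k - l) := by
  intro g hg _ _
  have h1 : 0 < m * l - n * k := by nlinarith
  have h2 : 0 < (m - n) * (l - k) := mul_pos (by linarith) (by linarith)
  have h3 : 0 < g ^ 2 := by positivity
  nlinarith [mul_pos h1 hpos, mul_pos h3 h2]
end

section
/- Let k, l, m, n be nonnegative integers with k < m < n < l. Then lm(m-k)(m-k-1) + k(n-m)(m-k)^2 + kn(m-k) + (l-n)(lm(m-1) - nk^2) + kn(l-n) ≥ 0, with equality if and only if k = 0 and m = 1. -/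
/-- Nonnegativity of the auxiliary expression for a facet above the diagonal,
with equality iff it is a `B₁`-facet with respect to `x`. -/
theorem stmt2 (k l m n : ℤ) (hk : 0 ≤ k)
    (hkm : k < m) (hmn : m < n) (hnl : n < l) :
    0 ≤ l * m * (m - k) * (m - k - 1) + k * (n - m) * (m - k) ^ 2
          + k * n * (m - k) + (l - n) * (l * m * (m - 1) - n * k ^ 2)
          + k * n * (l - n)
    ∧ (l * m * (m - k) * (m - k - 1) + k * (n - m) * (m - k) ^ 2
          + k * n * (m - k) + (l - n) * (l * m * (m - 1) - n * k ^ 2)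
          + k * n * (l - n) = 0 ↔ k = 0 ∧ m = 1) := by
  have hl0 : 0 < l := by omega
  have hm0 : 0 < m := by omega
  have hn0 : 0 < n := by omega
  rcases hk.lt_or_eq with h1 | h0
  · -- k ≥ 1
    have hk1 : 1 ≤ k := h1
    have ht1 : 0 ≤ l * m * (m - k) * (m - k - 1) := by
      exact mul_nonneg (mul_nonneg (mul_nonneg hl0.le hm0.le) (by omega)) (by omega)
    have ht2 : 0 < k * (n - m) * (m - k) ^ 2 := by
      have h2 : (0:ℤ) < (m - k) ^ 2 := pow_pos (by omega) 2
      have : (0:ℤ) < k * (n - m) := by nlinarith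
      nlinarith
    have ht3 : 0 < k * n * (m - k) := by
      have : (0:ℤ) < k * n := by nlinarith
      nlinarith
    have ht4 : 0 < (l - n) * (l * m * (m - 1) - n * k ^ 2) := by
      have hmm : k ^ 2 + k ≤ m * (m - 1) := by nlinarith
      have : n * k ^ 2 < l * m * (m - 1) := by nlinarith
      nlinarith
    have ht5 : 0 < k * n * (l - n) := by
      have : (0:ℤ) < k * n := by nlinarith
      nlinarith
    constructor
    · linarith
    · constructor
      · intro h; linarith
      · rintro ⟨rfl, rfl⟩; omega
  · -- k = 0
    subst h0
    have hm1 : 1 ≤ m := by omega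
    have hE : l * m * (m - 0) * (m - 0 - 1) + 0 * (n - m) * (m - 0) ^ 2
          + 0 * n * (m - 0) + (l - n) * (l * m * (m - 1) - n * 0 ^ 2)
          + 0 * n * (l - n) = l * m * (m - 1) * (m + l - n) := by ring
    rw [hE]
    have h2 : 0 < m + l - n := by omega
    have h3 : 0 ≤ m - 1 := by omega
    constructor
    · have : (0:ℤ) ≤ l * m * (m - 1) := by positivity
      nlinarith
    constructor
    · intro h
      refine ⟨rfl, ?_⟩
      by_contra hm
      have hm2 : 2 ≤ m := by omega
      have : (0:ℤ) < l * m * (m - 1) * (m + l - n) := by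
        have : (0:ℤ) < l * m * (m - 1) := mul_pos (mul_pos hl0 hm0) (by omega)
        nlinarith
      omega
    · rintro ⟨-, rfl⟩; ring
end

section
/- Let k, l, m, n be nonnegative integers with k < m < n < l, and let g = gcd(m - k, l - n). If (k, m) ≠ (0, 1), then (ml - nk)(ml - nk + k - m + n - l) + g^2(n - m)(k - l) > 0. -/
/-!
Since `g ∣ m - k`, we have `g ≤ m - k`, and as the coefficient `(n - m)(k - l)` of `g²` is negative,
it suffices to treat `g = m - k`. There the expression is a sum of nonnegative terms
(`facet_identity`), among which `kn(m-k)` is positive when `k ≥ 1` and `lm(m-k)(m-k-1)` is positive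
when `k = 0, m ≥ 2`.
-/

lemma sq_gcd_le_sq_left {a : ℤ} (b : ℤ) (ha : 0 < a) : (Int.gcd a b : ℤ) ^ 2 ≤ a ^ 2 :=
  pow_le_pow_left₀ (Int.natCast_nonneg _) (Int.gcd_le_left b ha) 2

lemma facet_identity (k l m n : ℤ) :
    (m * l - n * k) * (m * l - n * k + k - m + n - l) - (l - k) * (n - m) * (m - k) ^ 2
      = l * m * (m - k) * (m - k - 1) + k * (n - m) * (m - k) ^ 2 + k * n * (m - k)
        + (l - n) * (l * m * (m - 1) - n * k ^ 2) + k * n * (l - n) := by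
  ring

lemma mul_sq_le_mul_mul_sub_one {k l m n : ℤ} (hk : 0 ≤ k) (hkm : k < m) (hnl : n ≤ l)
    (hn : 0 ≤ n) : n * k ^ 2 ≤ l * m * (m - 1) := by
  have hsq : k ^ 2 ≤ m * (m - 1) := by nlinarith
  calc n * k ^ 2 ≤ l * k ^ 2 := by gcongr
    _ ≤ l * (m * (m - 1)) := by gcongr; linarith
    _ = l * m * (m - 1) := by ring

lemma facet_pos_at_max_gcd {k l m n : ℤ} (hk : 0 ≤ k) (hkm : k < m) (hmn : m < n) (hnl : n < l)
    (hB : ¬(k = 0 ∧ m = 1)) :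
    0 < (m * l - n * k) * (m * l - n * k + k - m + n - l) - (l - k) * (n - m) * (m - k) ^ 2 := by
  have hd : 0 < m - k := by linarith
  have hm : 0 < m := by linarith
  have hl : 0 < l := by linarith
  have hdiff : 0 ≤ l * m * (m - 1) - n * k ^ 2 :=
    sub_nonneg.2 (mul_sq_le_mul_mul_sub_one hk hkm hnl.le (by linarith))
  have hnonneg : 0 ≤ k * (n - m) * (m - k) ^ 2 + (l - n) * (l * m * (m - 1) - n * k ^ 2)
      + k * n * (l - n) := by
    have hnm : 0 ≤ n - m := by linarith
    have hln : 0 ≤ l - n := by linarith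
    have hn : 0 ≤ n := by linarith
    positivity
  have hpos : 0 < l * m * (m - k) * (m - k - 1) + k * n * (m - k) := by
    rcases hk.lt_or_eq with hk_pos | rfl
    · have : 0 < k * n * (m - k) := by have := hm.trans hmn; positivity
      have : 0 ≤ m - k - 1 := by omega
      have : 0 ≤ l * m * (m - k) * (m - k - 1) := by positivity
      linarith
    · have : 0 < m - 1 := by omega
      simpa using (by positivity : 0 < l * m * m * (m - 1))
  rw [facet_identity]
  linear_combination hpos + hnonneg

/-- Positivity of F for a facet above the diagonal that is not a `B₁`-facet. -/
theorem stmt3 (k l m n g : ℤ) (hk : 0 ≤ k)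
    (hkm : k < m) (hmn : m < n) (hnl : n < l)
    (hg : g = (Int.gcd (m - k) (l - n) : ℤ))
    (hB : ¬(k = 0 ∧ m = 1)) :
    0 < (m * l - n * k) * (m * l - n * k + k - m + n - l)
          + g ^ 2 * (n - m) * (k - l) := by
  have hg2 : g ^ 2 ≤ (m - k) ^ 2 := hg ▸ sq_gcd_le_sq_left _ (by linarith)
  have hloss : 0 ≤ (l - k) * (n - m) * ((m - k) ^ 2 - g ^ 2) := by
    have hlk : 0 ≤ l - k := by linarith
    have hnm : 0 ≤ n - m := by linarith
    exact mul_nonneg (mul_nonneg hlk hnm) (sub_nonneg.2 hg2)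
  linarith [facet_pos_at_max_gcd hk hkm hmn hnl hB]
end

section
/- Let k, l, m, n be rational numbers with k < m, n < l, k ≠ l, n ≠ m, lm - kn ≠ 0, and l - n + m - k ≠ lm - kn (i.e., the candidate pole is not -1). Define R(s) as the sum of the three rational functions: -s·g²/((s+1)((lm-kn)s + l-n+m-k)), ((b-l)(m-k)-(l-n)(k-a))/(((lm-kn)s+l-n+m-k)((bk-al)s+b-l+k-a)), and ((l-n)(c-m)-(n-d)(m-k))/(((lm-kn)s+l-n+m-k)((nc-md)s+n-d+c-m)), for parameters a,b,c,d,g. If all the denominators other than ((lm-kn)s + l-n+m-k) are nonzero at s₀ = -(l-n+m-k)/(lm-kn), then the residue of R at s₀ equals (l-n+m-k)·((ml-nk)(ml-nk+k-m+n-l) + g²(n-m)(k-l)) / ((lm-kn)(n-m)(k-l)(ml-nk+k-m+n-l)). -/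
open Filter Topology

/-!
Write `N = lm - kn` and `C = l - n + m - k`. The common factor `N s + C` of the denominators
equals `N (s - s₀)`, so off `s₀` the function `(s - s₀) R(s)` is `h(s) / N` with `h` continuous
at `s₀`, and the residue is `h(s₀) / N`. At the pole, `N ((bk - al) s₀ + b - l + k - a)` is
`(l - k)` times the numerator of the vertex term, which therefore contributes `1 / (l - k)`;
symmetrically `(m, n)` contributes `1 / (m - n)`, and the facet term contributes
`C g² / (N (N - C))`. Adding these gives the stated value.
-/

theorem tendsto_sub_mul_div_of_eq_mul_sub {𝕜 : Type*} [Field 𝕜] [TopologicalSpace 𝕜]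
    [ContinuousMul 𝕜] {h L : 𝕜 → 𝕜} {N s₀ : 𝕜} (hL : ∀ s, L s = N * (s - s₀))
    (hh : ContinuousAt h s₀) :
    Tendsto (fun s => (s - s₀) * (h s / L s)) (𝓝[≠] s₀) (𝓝 (h s₀ / N)) := by
  refine ((hh.tendsto.div_const N).mono_left nhdsWithin_le_nhds).congr' ?_
  filter_upwards [self_mem_nhdsWithin] with s hs
  rw [hL, ← div_div, mul_div_cancel₀ _ (sub_ne_zero.mpr hs)]

theorem vertex_term_div_at_pole {k l m n a b s₀ : ℚ} (hlk : l ≠ k) (hN : l * m - k * n ≠ 0)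
    (hpole : (l * m - k * n) * s₀ = -(l - n + m - k))
    (hden : (b * k - a * l) * s₀ + b - l + k - a ≠ 0) :
    ((b - l) * (m - k) - (l - n) * (k - a)) / ((b * k - a * l) * s₀ + b - l + k - a)
      / (l * m - k * n) = 1 / (l - k) := by
  rw [div_div, div_eq_div_iff (mul_ne_zero hden hN) (sub_ne_zero.mpr hlk)]
  linear_combination (-(b * k - a * l)) * hpole

theorem pole_add_one_ne_zero {k l m n s₀ : ℚ} (hnot1 : l - n + m - k ≠ l * m - k * n)
    (hpole : (l * m - k * n) * s₀ = -(l - n + m - k)) : s₀ + 1 ≠ 0 := by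
  rintro hs₀
  rw [eq_neg_of_add_eq_zero_left hs₀] at hpole
  exact hnot1 (by linarith)

theorem facet_term_div_at_pole {k l m n g s₀ : ℚ} (hN : l * m - k * n ≠ 0)
    (hnot1 : l - n + m - k ≠ l * m - k * n)
    (hpole : (l * m - k * n) * s₀ = -(l - n + m - k)) :
    -(s₀ * g ^ 2) / (s₀ + 1) / (l * m - k * n)
      = (l - n + m - k) * g ^ 2 / ((l * m - k * n - (l - n + m - k)) * (l * m - k * n)) := by
  have hs₀ := pole_add_one_ne_zero hnot1 hpole
  have hNC : l * m - k * n - (l - n + m - k) ≠ 0 := sub_ne_zero.mpr hnot1.symm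
  rw [div_div, div_eq_div_iff (mul_ne_zero hs₀ hN) (mul_ne_zero hNC hN)]
  linear_combination (-(g ^ 2) * (l * m - k * n)) * hpole

theorem facet_residue_eq {k l m n a b c d g s₀ : ℚ} (hkl : k ≠ l) (hnm : n ≠ m)
    (hN : l * m - k * n ≠ 0) (hnot1 : l - n + m - k ≠ l * m - k * n)
    (hpole : (l * m - k * n) * s₀ = -(l - n + m - k))
    (hden1 : (b * k - a * l) * s₀ + b - l + k - a ≠ 0)
    (hden2 : (n * c - m * d) * s₀ + n - d + c - m ≠ 0) :
    (-(s₀ * g ^ 2) / (s₀ + 1)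
        + ((b - l) * (m - k) - (l - n) * (k - a)) / ((b * k - a * l) * s₀ + b - l + k - a)
        + ((l - n) * (c - m) - (n - d) * (m - k)) / ((n * c - m * d) * s₀ + n - d + c - m))
        / (l * m - k * n)
      = (l - n + m - k) *
          ((m * l - n * k) * (m * l - n * k + k - m + n - l) + g ^ 2 * (n - m) * (k - l)) /
          ((l * m - k * n) * (n - m) * (k - l) * (m * l - n * k + k - m + n - l)) := by
  -- the vertex `(c, d)` plays the role of `(a, b)` after the symmetry `(k, l) ↔ (n, m)`
  have hvertex₂ : ((l - n) * (c - m) - (n - d) * (m - k))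
      / ((n * c - m * d) * s₀ + n - d + c - m) / (l * m - k * n) = 1 / (m - n) := by
    convert vertex_term_div_at_pole (k := n) (l := m) (m := l) (n := k) (a := d) (b := c)
      (s₀ := s₀) hnm.symm (by rwa [mul_comm m, mul_comm n]) (by linear_combination hpole)
      (by convert hden2 using 1; ring) using 2 <;> ring
  have hNC : m * l - n * k + k - m + n - l ≠ 0 := fun h => hnot1 (by linear_combination -h)
  have hNC' : l * m - k * n - (l - n + m - k) ≠ 0 := sub_ne_zero.mpr hnot1.symm
  have hlk : l - k ≠ 0 := sub_ne_zero.mpr hkl.symm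
  have hmn : m - n ≠ 0 := sub_ne_zero.mpr hnm.symm
  have hkl' : k - l ≠ 0 := sub_ne_zero.mpr hkl
  have hnm' : n - m ≠ 0 := sub_ne_zero.mpr hnm
  rw [add_div, add_div, facet_term_div_at_pole hN hnot1 hpole,
    vertex_term_div_at_pole hkl.symm hN hpole hden1, hvertex₂]
  rw [div_add_div _ _ (mul_ne_zero hNC' hN) hlk, div_add_div _ _ (by simp [*]) hmn,
    div_eq_div_iff (by simp [*]) (by simp [*])]
  ring

theorem stmt5_general (k l m n a b c d g : ℚ)
    (hkl : k ≠ l) (hnm : n ≠ m)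
    (hN : l * m - k * n ≠ 0)
    (hnot1 : l - n + m - k ≠ l * m - k * n)
    (s₀ : ℚ) (hs₀ : s₀ = -(l - n + m - k) / (l * m - k * n))
    (hden1 : (b * k - a * l) * s₀ + b - l + k - a ≠ 0)
    (hden2 : (n * c - m * d) * s₀ + n - d + c - m ≠ 0) :
    Tendsto
      (fun s : ℚ => (s - s₀) *
        (-(s * g ^ 2) / ((s + 1) * ((l * m - k * n) * s + l - n + m - k))
          + ((b - l) * (m - k) - (l - n) * (k - a)) /
              (((l * m - k * n) * s + l - n + m - k) *
                ((b * k - a * l) * s + b - l + k - a))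
          + ((l - n) * (c - m) - (n - d) * (m - k)) /
              (((l * m - k * n) * s + l - n + m - k) *
                ((n * c - m * d) * s + n - d + c - m))))
      (𝓝[≠] s₀)
      (𝓝 ((l - n + m - k) *
            ((m * l - n * k) * (m * l - n * k + k - m + n - l)
              + g ^ 2 * (n - m) * (k - l)) /
            ((l * m - k * n) * (n - m) * (k - l) *
              (m * l - n * k + k - m + n - l)))) := by
  have hpole : (l * m - k * n) * s₀ = -(l - n + m - k) := by
    rw [hs₀, mul_div_cancel₀ _ hN]
  rw [← facet_residue_eq hkl hnm hN hnot1 hpole hden1 hden2]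
  refine (tendsto_sub_mul_div_of_eq_mul_sub
    (h := fun s => -(s * g ^ 2) / (s + 1)
      + ((b - l) * (m - k) - (l - n) * (k - a)) / ((b * k - a * l) * s + b - l + k - a)
      + ((l - n) * (c - m) - (n - d) * (m - k)) / ((n * c - m * d) * s + n - d + c - m))
    (L := fun s => (l * m - k * n) * s + l - n + m - k)
    (fun s => by linear_combination hpole) ?_).congr fun s => ?_
  · have := pole_add_one_ne_zero hnot1 hpole
    fun_prop (disch := assumption)
  · simp only [add_div, div_div, mul_comm]

/-- The residue at `s₀ = -(l-n+m-k)/(lm-kn)` of the sum of the three terms of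
the local topological zeta function coming from a compact facet with endpoints
`(k,l)` and `(m,n)`, neighbouring vertices `(a,b)` and `(c,d)`, and normalized
volume `g`. -/
theorem stmt5 (k l m n a b c d g : ℚ)
    (hkm : k < m) (hnl : n < l) (hkl : k ≠ l) (hnm : n ≠ m)
    (hN : l * m - k * n ≠ 0)
    (hnot1 : l - n + m - k ≠ l * m - k * n)
    (s₀ : ℚ) (hs₀ : s₀ = -(l - n + m - k) / (l * m - k * n))
    (hden1 : (b * k - a * l) * s₀ + b - l + k - a ≠ 0)
    (hden2 : (n * c - m * d) * s₀ + n - d + c - m ≠ 0) :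
    Tendsto
      (fun s : ℚ => (s - s₀) *
        (-(s * g ^ 2) / ((s + 1) * ((l * m - k * n) * s + l - n + m - k))
          + ((b - l) * (m - k) - (l - n) * (k - a)) /
              (((l * m - k * n) * s + l - n + m - k) *
                ((b * k - a * l) * s + b - l + k - a))
          + ((l - n) * (c - m) - (n - d) * (m - k)) /
              (((l * m - k * n) * s + l - n + m - k) *
                ((n * c - m * d) * s + n - d + c - m))))
      (𝓝[≠] s₀)
      (𝓝 ((l - n + m - k) *
            ((m * l - n * k) * (m * l - n * k + k - m + n - l)
              + g ^ 2 * (n - m) * (k - l)) /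
            ((l * m - k * n) * (n - m) * (k - l) *
              (m * l - n * k + k - m + n - l)))) :=
  stmt5_general k l m n a b c d g hkl hnm hN hnot1 s₀ hs₀ hden1 hden2
end

section
/- Let τ be a compact facet of a Newton polyhedron in ℝ²_{≥0} with vertices (k,l) and (m,n) where k < m and n < l. If neither of the following holds: (k = 0 and m = 1) or (n = 0 and l = 1), then (ml - nk)(ml - nk + k - m + n - l) + g²(n-m)(k-l) ≠ 0, where g = gcd(m-k, l-n), provided ml - nk + k - m + n - l > 0. -/
/-! With `a = m - k`, `b = l - n` and `D = ml - nk`, the quantity is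
`F = D (D - a - b) + g² (n - m)(k - l)`. If the facet crosses the diagonal both summands are
nonnegative and the first is positive. Above the diagonal, put `s = l - k` and `u = D - g s`;
then `u = k (a + b) + (a - g) s ≥ 0` and `F = u (u + 2 g s - a - b) + (a + b) g s (g - 1)`,
which vanishes only if `u = 0` and `g = 1`, i.e. `k = 0` and `m = 1`. Below the diagonal one
reflects, since `F` is invariant under `(k, l, m, n) ↦ (n, m, l, k)`. -/

def residueNumerator (k l m n g : ℤ) : ℤ :=
  (m * l - n * k) * (m * l - n * k + k - m + n - l) + g ^ 2 * (n - m) * (k - l)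

theorem residueNumerator_swap (k l m n g : ℤ) :
    residueNumerator n m l k g = residueNumerator k l m n g := by
  unfold residueNumerator; ring

theorem residueNumerator_pos_of_crosses_diagonal {k l m n : ℤ} (g : ℤ)
    (hnm : n ≤ m) (hkl : k ≤ l) (hpos : 0 < m * l - n * k + k - m + n - l)
    (hkm : k < m) (hnl : n < l) :
    0 < residueNumerator k l m n g := by
  have hD : 0 < m * l - n * k := by linarith
  have hcross : 0 ≤ g ^ 2 * (n - m) * (k - l) := by
    have : 0 ≤ (m - n) * (l - k) := mul_nonneg (by linarith) (by linarith)
    nlinarith [sq_nonneg g]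
  unfold residueNumerator
  nlinarith [mul_pos hD hpos]

theorem residueNumerator_pos_of_above_diagonal {k l m n g : ℤ}
    (hk : 0 ≤ k) (hmn : m < n) (hnl : n < l) (hg : 0 < g) (hgm : g ≤ m - k)
    (hB : ¬(k = 0 ∧ m = 1)) :
    0 < residueNumerator k l m n g := by
  set u := m * l - n * k - g * (l - k) with hu_def
  have hu : u = k * (m - k + l - n) + (m - k - g) * (l - k) := by rw [hu_def]; ring
  have hu_nonneg : 0 ≤ u := by
    rw [hu]; exact add_nonneg (by nlinarith) (mul_nonneg (by linarith) (by linarith))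
  have hv : 0 < 2 * g * (l - k) - (m - k + l - n) := by nlinarith
  have hw : 0 < (m - k + l - n) * g * (l - k) :=
    mul_pos (mul_pos (by linarith) hg) (by linarith)
  have hF : residueNumerator k l m n g
      = u * (2 * g * (l - k) - (m - k + l - n) + u) + (m - k + l - n) * g * (l - k) * (g - 1) := by
    rw [residueNumerator, hu_def]; ring
  rw [hF]
  rcases eq_or_lt_of_le (show 1 ≤ g from hg) with rfl | hg2
  · have hu_pos : 0 < u := by
      rw [hu]
      rcases eq_or_lt_of_le hk with rfl | hk_pos
      · have hm : 2 ≤ m := by omega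
        nlinarith
      · nlinarith
    nlinarith [mul_pos hu_pos (add_pos_of_pos_of_nonneg hv hu_nonneg)]
  · nlinarith [mul_nonneg hu_nonneg (add_nonneg hv.le hu_nonneg)]

/-- For a compact facet with vertices `(k,l)` and `(m,n)` that is not a
`B₁`-facet, the numerator factor `F` of the residue is nonzero. -/
theorem stmt6 (k l m n g : ℤ) (hk : 0 ≤ k) (hn : 0 ≤ n)
    (hkm : k < m) (hnl : n < l)
    (hg : g = (Int.gcd (m - k) (l - n) : ℤ))
    (hB : ¬((k = 0 ∧ m = 1) ∨ (n = 0 ∧ l = 1)))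
    (hpos : 0 < m * l - n * k + k - m + n - l) :
    (m * l - n * k) * (m * l - n * k + k - m + n - l)
        + g ^ 2 * (n - m) * (k - l) ≠ 0 := by
  have hg_pos : 0 < g := hg ▸ Int.natCast_pos.mpr (Int.gcd_pos_of_ne_zero_left _ (by omega))
  have hg_left : g ≤ m - k := hg ▸ Int.gcd_le_left _ (by omega)
  have hg_right : g ≤ l - n := hg ▸ Int.gcd_le_right _ (by omega)
  refine (show 0 < residueNumerator k l m n g from ?_).ne'
  rcases lt_or_ge m n with hmn | hnm
  · exact residueNumerator_pos_of_above_diagonal hk hmn (by omega) hg_pos hg_left (by tauto)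
  rcases lt_or_ge l k with hlk | hkl
  · rw [← residueNumerator_swap]
    exact residueNumerator_pos_of_above_diagonal hn hlk (by omega) hg_pos hg_right (by tauto)
  · exact residueNumerator_pos_of_crosses_diagonal g hnm hkl hpos hkm hnl
end

section
/- Let k, l, m, n be nonnegative integers with n < k < l < m (facet lying below the diagonal, obtained from the above-diagonal case by swapping n↔k and m↔l), and let g divide gcd(m-k, l-n) with g ≥ 1. If (n, l) ≠ (0, 1), then (ml - nk)(ml - nk + k - m + n - l) + g²(n-m)(k-l) > 0. -/
/-!
With `X = m * l - n * k`, the expression equals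
`X * (X - (m - k) - (l - n)) + g ^ 2 * (m - n) * (l - k)`.
The second summand is positive by the ordering of `n, k, l, m`, and the first is nonnegative
because `X - (m - k) - (l - n) = (k - 1) * (l - n) + n * (m - k) + (m - k) * (l - n - 1)`.
-/

lemma sub_add_sub_le_mul_sub_mul {k l m n : ℤ} (hn : 0 ≤ n) (hnk : n < k) (hnl : n < l)
    (hkm : k < m) : (m - k) + (l - n) ≤ m * l - n * k := by
  have hk : 0 ≤ k - 1 := by omega
  have hl : 0 ≤ l - n - 1 := by omega
  have hmk : 0 ≤ m - k := by omega
  have hln : 0 ≤ l - n := by omega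
  linear_combination mul_nonneg hk hln + mul_nonneg hn hmk + mul_nonneg hmk hl

theorem stmt13_general (k l m n g : ℤ) (hn : 0 ≤ n)
    (hnk : n < k) (hkl : k < l) (hlm : l < m)
    (hg1 : 1 ≤ g) :
    0 < (m * l - n * k) * (m * l - n * k + k - m + n - l)
          + g ^ 2 * (n - m) * (k - l) := by
  have hX := sub_add_sub_le_mul_sub_mul hn hnk (hnk.trans hkl) (hkl.trans hlm)
  have hfirst : 0 ≤ (m * l - n * k) * (m * l - n * k - (m - k) - (l - n)) :=
    mul_nonneg (by linarith) (by linarith)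
  have hsecond : 0 < g ^ 2 * ((m - n) * (l - k)) :=
    mul_pos (by positivity) (mul_pos (by omega) (by omega))
  calc 0 < (m * l - n * k) * (m * l - n * k - (m - k) - (l - n))
          + g ^ 2 * ((m - n) * (l - k)) := add_pos_of_nonneg_of_pos hfirst hsecond
    _ = _ := by ring

/-- Positivity of F for a facet below the diagonal that is not a `B₁`-facet
with respect to `y`. -/
theorem stmt13 (k l m n g : ℤ) (hn : 0 ≤ n)
    (hnk : n < k) (hkl : k < l) (hlm : l < m)
    (hg1 : 1 ≤ g) (hgdvd : g ∣ (Int.gcd (m - k) (l - n) : ℤ))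
    (hB : ¬(n = 0 ∧ l = 1)) :
    0 < (m * l - n * k) * (m * l - n * k + k - m + n - l)
          + g ^ 2 * (n - m) * (k - l) :=
  stmt13_general k l m n g hn hnk hkl hlm hg1
end
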